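/- arXiv:1302.6670 — 3 statements merged into one kernel-verified Lean document; each statement's English description precedes it below -/
import Mathlib

section
/- Let n ≥ 1, let x₀ ∈ ℝⁿ, let ρ > 0 and L > 0, and let h : ℝⁿ → ℝ be L-Lipschitz on the closed ball of radius ρ centered at x₀. If |h(x₀)| ≤ 2·L·ρ, then |h(x₀)|^{n+1} ≤ 2^{n+1} · Lⁿ · (vol(B₁))⁻¹ · ∫_{B_ρ(x₀)} |h(x)| dx, where vol(B₁) denotes the Lebesgue measure of the unit ball in ℝⁿ and the integral is with respect to Lebesgue measure. -/
open MeasureTheory Metric Module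

open scoped NNReal

/-! On the ball of radius `r = |h x₀| / (2L)` around `x₀` the Lipschitz bound keeps `|h|` above
`|h x₀| / 2`, and the smallness assumption puts this ball inside `B_ρ(x₀)`. Hence
`∫_{B_ρ(x₀)} |h| ≥ |h x₀| / 2 · rⁿ · vol(B₁)`, which rearranges to the claim. -/

theorem LipschitzOnWith.half_abs_le_abs {X : Type*} [PseudoMetricSpace X] {f : X → ℝ} {K : ℝ≥0}
    {s : Set X} (hf : LipschitzOnWith K f s) {x y : X} (hx : x ∈ s) (hy : y ∈ s)
    (hxy : K * dist y x ≤ |f x| / 2) : |f x| / 2 ≤ |f y| := by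
  have hdist : |f y - f x| ≤ K * dist y x := by
    simpa only [Real.dist_eq] using hf.dist_le_mul y hy x hx
  linarith [abs_sub_abs_le_abs_sub (f x) (f y), abs_sub_comm (f x) (f y)]

theorem LipschitzOnWith.half_abs_mul_measureReal_ball_le_setIntegral_abs {X : Type*}
    [MetricSpace X] [ProperSpace X] [MeasurableSpace X] [OpensMeasurableSpace X]
    (μ : Measure X) [IsFiniteMeasureOnCompacts μ] {f : X → ℝ} {K : ℝ≥0} {x : X} {r ρ : ℝ}
    (hf : LipschitzOnWith K f (closedBall x ρ)) (hr : 0 < r) (hrρ : r ≤ ρ)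
    (hKr : K * r ≤ |f x| / 2) :
    |f x| / 2 * μ.real (ball x r) ≤ ∫ y in ball x ρ, |f y| ∂μ := by
  have hint : IntegrableOn (fun y => |f y|) (ball x ρ) μ :=
    (hf.continuousOn.abs.integrableOn_compact (isCompact_closedBall x ρ)).mono_set
      ball_subset_closedBall
  have hlow : ∀ y ∈ ball x r, |f x| / 2 ≤ |f y| := fun y hy =>
    hf.half_abs_le_abs (mem_closedBall_self (hr.le.trans hrρ))
      (ball_subset_closedBall (ball_subset_ball hrρ hy))
      ((mul_le_mul_of_nonneg_left (mem_ball.1 hy).le K.2).trans hKr)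
  calc |f x| / 2 * μ.real (ball x r) ≤ ∫ y in ball x r, |f y| ∂μ :=
        setIntegral_ge_of_const_le_real measurableSet_ball measure_ball_lt_top.ne hlow
          (hint.mono_set (ball_subset_ball hrρ))
    _ ≤ ∫ y in ball x ρ, |f y| ∂μ :=
        setIntegral_mono_set hint (.of_forall fun _ => abs_nonneg _)
          (ball_subset_ball hrρ).eventuallyLE

theorem LipschitzOnWith.abs_pow_mul_measureReal_ball_le_setIntegral_abs {E : Type*}
    [NormedAddCommGroup E] [NormedSpace ℝ E] [FiniteDimensional ℝ E] [MeasurableSpace E]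
    [BorelSpace E] (μ : Measure E) [μ.IsAddHaarMeasure] {f : E → ℝ} {K : ℝ≥0} {x : E} {ρ : ℝ}
    (hf : LipschitzOnWith K f (closedBall x ρ)) (hsmall : |f x| ≤ 2 * K * ρ) :
    |f x| ^ (finrank ℝ E + 1) * μ.real (ball 0 1) ≤
      2 ^ (finrank ℝ E + 1) * K ^ finrank ℝ E * ∫ y in ball x ρ, |f y| ∂μ := by
  set d := finrank ℝ E
  rcases (abs_nonneg (f x)).eq_or_lt with hfx | hfx
  · rw [← hfx, zero_pow d.succ_ne_zero, zero_mul]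
    exact mul_nonneg (by positivity)
      (setIntegral_nonneg measurableSet_ball fun _ _ => abs_nonneg _)
  have hK : 0 < (K : ℝ) := by
    rcases (NNReal.coe_nonneg K).eq_or_lt with hK | hK
    · rw [← hK] at hsmall
      linarith
    · exact hK
  set r := |f x| / (2 * K)
  have hr : 0 < r := by positivity
  have hrρ : r ≤ ρ := by
    rw [div_le_iff₀ (by positivity)]
    linarith
  have hKr : K * r = |f x| / 2 := by
    simp only [r]
    field_simp
  have hball : μ.real (ball x r) = r ^ d * μ.real (ball 0 1) := by
    rw [measureReal_def, Measure.addHaar_ball_of_pos μ x hr, ENNReal.toReal_mul,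
      ENNReal.toReal_ofReal (by positivity), measureReal_def]
  have key := hf.half_abs_mul_measureReal_ball_le_setIntegral_abs μ hr hrρ hKr.le
  rw [hball] at key
  calc |f x| ^ (d + 1) * μ.real (ball 0 1)
        = 2 ^ (d + 1) * K ^ d * (|f x| / 2 * (r ^ d * μ.real (ball 0 1))) := by
          rw [div_pow, mul_pow]
          field_simp
          ring
    _ ≤ 2 ^ (d + 1) * K ^ d * ∫ y in ball x ρ, |f y| ∂μ := by gcongr

theorem lipschitz_L1_pointwise_bound_general
    {n : ℕ} (x₀ : EuclideanSpace ℝ (Fin n)) (ρ L : ℝ)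
    (hL : 0 < L) (h : EuclideanSpace ℝ (Fin n) → ℝ)
    (hLip : ∀ x ∈ closedBall x₀ ρ, ∀ y ∈ closedBall x₀ ρ,
      |h x - h y| ≤ L * ‖x - y‖)
    (hsmall : |h x₀| ≤ 2 * L * ρ) :
    |h x₀| ^ (n + 1) ≤
      2 ^ (n + 1) * L ^ n *
        (volume (ball (0 : EuclideanSpace ℝ (Fin n)) 1)).toReal⁻¹ *
        ∫ x in ball x₀ ρ, |h x| := by
  have hf : LipschitzOnWith ⟨L, hL.le⟩ h (closedBall x₀ ρ) :=
    .of_dist_le_mul fun x hx y hy => by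
      rw [dist_eq_norm, dist_eq_norm, Real.norm_eq_abs]
      exact hLip x hx y hy
  have key := hf.abs_pow_mul_measureReal_ball_le_setIntegral_abs volume hsmall
  rw [finrank_euclideanSpace_fin] at key
  have hV : 0 < volume.real (ball (0 : EuclideanSpace ℝ (Fin n)) 1) :=
    ENNReal.toReal_pos (measure_ball_pos _ _ one_pos).ne' measure_ball_lt_top.ne
  rwa [← measureReal_def, mul_right_comm _ _ (∫ x in ball x₀ ρ, |h x|), ← div_eq_mul_inv,
    le_div_iff₀ hV]

theorem lipschitz_L1_pointwise_bound
    {n : ℕ} (hn : 1 ≤ n) (x₀ : EuclideanSpace ℝ (Fin n)) (ρ L : ℝ)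
    (hρ : 0 < ρ) (hL : 0 < L) (h : EuclideanSpace ℝ (Fin n) → ℝ)
    (hLip : ∀ x ∈ closedBall x₀ ρ, ∀ y ∈ closedBall x₀ ρ,
      |h x - h y| ≤ L * ‖x - y‖)
    (hsmall : |h x₀| ≤ 2 * L * ρ) :
    |h x₀| ^ (n + 1) ≤
      2 ^ (n + 1) * L ^ n *
        (volume (ball (0 : EuclideanSpace ℝ (Fin n)) 1)).toReal⁻¹ *
        ∫ x in ball x₀ ρ, |h x| :=
  lipschitz_L1_pointwise_bound_general x₀ ρ L hL h hLip hsmall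
end

section
/- Let n ≥ 1 and C > 0, and let h : ℝⁿ → ℝ be a function which is differentiable at every point x with 0 < |x| < 1 and satisfies |∇h(x)| ≤ C/|x| for all 0 < |x| < 1, as well as |h(x)| ≤ C for all 0 < |x| < 1. Assume that r^{−n} ∫_{{x : r < |x| < 2r}} |h(x)| dx → 0 as r → 0⁺. Then h(x) → 0 as x → 0 (i.e., for every ε > 0 there is δ > 0 such that |h(x)| < ε whenever 0 < |x| < δ). -/
/-!
If `|h x| ≥ ε` at a point with `‖x‖ = 3r/2`, the gradient bound `‖Dh‖ ≤ C / r` on the annulus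
`r ≤ ‖y‖ ≤ 2r` keeps `|h| ≥ ε/2` on the ball of radius `m r` around `x`, where
`m = min (1/4) (ε / 2C)` does not depend on `r`. That ball lies in the annulus, so the annular
integral of `|h|` is at least `(ε/2) m^n vol(B₁) rⁿ`, which is incompatible with the annular
averages tending to `0`.
-/

open MeasureTheory Metric Filter Set Module

section Annulus

variable {E : Type*} [NormedAddCommGroup E]

def annulus (r R : ℝ) : Set E := {x | r < ‖x‖ ∧ ‖x‖ < R}

def closedAnnulus (r R : ℝ) : Set E := {x | r ≤ ‖x‖ ∧ ‖x‖ ≤ R}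

theorem annulus_subset_closedAnnulus {r R : ℝ} : (annulus r R : Set E) ⊆ closedAnnulus r R :=
  fun _ hx => ⟨hx.1.le, hx.2.le⟩

theorem isCompact_closedAnnulus [ProperSpace E] (r R : ℝ) :
    IsCompact (closedAnnulus r R : Set E) :=
  (isCompact_closedBall 0 R).of_isClosed_subset
    ((isClosed_le continuous_const continuous_norm).inter
      (isClosed_le continuous_norm continuous_const))
    fun _ hx => mem_closedBall_zero_iff.mpr hx.2

theorem integrableOn_annulus_of_continuousOn [ProperSpace E] [MeasurableSpace E]
    [OpensMeasurableSpace E] {F : Type*} [NormedAddCommGroup F] (μ : Measure E)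
    [IsFiniteMeasureOnCompacts μ] {f : E → F} {r R : ℝ}
    (hf : ContinuousOn f (closedAnnulus r R)) : IntegrableOn f (annulus r R) μ :=
  (hf.integrableOn_compact (isCompact_closedAnnulus r R)).mono_set annulus_subset_closedAnnulus

theorem closedBall_subset_annulus {x : E} {r m : ℝ} (hm : m ≤ 1 / 4) (hr : 0 < r)
    (hx : ‖x‖ = 3 / 2 * r) : closedBall x (m * r) ⊆ annulus r (2 * r) := by
  intro y hy
  have hyx : |‖y‖ - ‖x‖| ≤ r / 4 :=
    (abs_norm_sub_norm_le y x).trans ((mem_closedBall_iff_norm.mp hy).trans (by nlinarith))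
  obtain ⟨h₁, h₂⟩ := abs_le.mp hyx
  exact ⟨by linarith, by linarith⟩

end Annulus

theorem sub_mul_le_abs_of_norm_fderiv_le {E : Type*} [NormedAddCommGroup E] [NormedSpace ℝ E]
    {f : E → ℝ} {x y : E} {ρ L : ℝ} (hf : ∀ z ∈ closedBall x ρ, DifferentiableAt ℝ f z)
    (hf' : ∀ z ∈ closedBall x ρ, ‖fderiv ℝ f z‖ ≤ L) (hL : 0 ≤ L) (hy : y ∈ closedBall x ρ) :
    |f x| - L * ρ ≤ |f y| := by
  have hρ : 0 ≤ ρ := nonneg_of_mem_closedBall hy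
  have hmvt : |f y - f x| ≤ L * ‖y - x‖ :=
    (convex_closedBall x ρ).norm_image_sub_le_of_norm_fderiv_le hf hf'
      (mem_closedBall_self hρ) hy
  have hyx : L * ‖y - x‖ ≤ L * ρ := mul_le_mul_of_nonneg_left (mem_closedBall_iff_norm.mp hy) hL
  linarith [abs_sub_abs_le_abs_sub (f x) (f y), abs_sub_comm (f x) (f y)]

theorem sub_mul_pow_le_setIntegral_annulus {E : Type*} [NormedAddCommGroup E]
    [NormedSpace ℝ E] [FiniteDimensional ℝ E] [MeasurableSpace E] [BorelSpace E]
    (μ : Measure E) [μ.IsAddHaarMeasure] {h : E → ℝ} {x : E} {C r m : ℝ}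
    (hdiff : ∀ z ∈ closedAnnulus r (2 * r), DifferentiableAt ℝ h z)
    (hgrad : ∀ z ∈ closedAnnulus r (2 * r), ‖fderiv ℝ h z‖ ≤ C / r)
    (hC : 0 ≤ C) (hr : 0 < r) (hm : 0 ≤ m) (hm' : m ≤ 1 / 4) (hx : ‖x‖ = 3 / 2 * r) :
    (|h x| - C * m) * (m ^ finrank ℝ E * μ.real (ball 0 1)) * r ^ finrank ℝ E ≤
      ∫ y in annulus r (2 * r), |h y| ∂μ := by
  have hball := closedBall_subset_annulus hm' hr hx
  have hball' := hball.trans annulus_subset_closedAnnulus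
  have hlow : ∀ y ∈ closedBall x (m * r), |h x| - C * m ≤ |h y| := by
    intro y hy
    have := sub_mul_le_abs_of_norm_fderiv_le (fun z hz => hdiff z (hball' hz))
      (fun z hz => hgrad z (hball' hz)) (div_nonneg hC hr.le) hy
    have hLρ : C / r * (m * r) = C * m := by field_simp
    rwa [hLρ] at this
  have hint : IntegrableOn (fun y => |h y|) (annulus r (2 * r)) μ :=
    integrableOn_annulus_of_continuousOn μ fun z hz =>
      (hdiff z hz).continuousAt.continuousWithinAt.abs
  calc (|h x| - C * m) * (m ^ finrank ℝ E * μ.real (ball 0 1)) * r ^ finrank ℝ E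
      = (|h x| - C * m) * μ.real (closedBall x (m * r)) := by
        rw [μ.addHaar_real_closedBall x (by positivity), mul_pow]; ring
    _ ≤ ∫ y in closedBall x (m * r), |h y| ∂μ :=
        setIntegral_ge_of_const_le_real measurableSet_closedBall measure_closedBall_lt_top.ne
          hlow (hint.mono_set hball)
    _ ≤ ∫ y in annulus r (2 * r), |h y| ∂μ :=
        setIntegral_mono_set hint (ae_of_all _ fun _ => abs_nonneg _) hball.eventuallyLE

theorem sub_mul_le_setIntegral_annulus_div_pow {E : Type*} [NormedAddCommGroup E]
    [NormedSpace ℝ E] [FiniteDimensional ℝ E] [MeasurableSpace E] [BorelSpace E]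
    (μ : Measure E) [μ.IsAddHaarMeasure] {h : E → ℝ} {x : E} {C r m : ℝ}
    (hdiff : ∀ z : E, 0 < ‖z‖ → ‖z‖ < 1 → DifferentiableAt ℝ h z)
    (hgrad : ∀ z : E, 0 < ‖z‖ → ‖z‖ < 1 → ‖fderiv ℝ h z‖ ≤ C / ‖z‖)
    (hC : 0 ≤ C) (hr : 0 < r) (hr1 : 2 * r < 1) (hm : 0 ≤ m) (hm' : m ≤ 1 / 4)
    (hx : ‖x‖ = 3 / 2 * r) :
    (|h x| - C * m) * (m ^ finrank ℝ E * μ.real (ball 0 1)) ≤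
      (∫ y in annulus r (2 * r), |h y| ∂μ) / r ^ finrank ℝ E := by
  have hgood : ∀ z ∈ (closedAnnulus r (2 * r) : Set E), 0 < ‖z‖ ∧ ‖z‖ < 1 :=
    fun z hz => ⟨hr.trans_le hz.1, hz.2.trans_lt hr1⟩
  rw [le_div_iff₀ (by positivity)]
  exact sub_mul_pow_le_setIntegral_annulus μ (fun z hz => hdiff z (hgood z hz).1 (hgood z hz).2)
    (fun z hz => (hgrad z (hgood z hz).1 (hgood z hz).2).trans
      (div_le_div_of_nonneg_left hC hr hz.1))
    hC hr hm hm' hx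

theorem h_tendsto_zero_at_origin_general
    {n : ℕ} (C : ℝ) (hC : 0 < C)
    (h : EuclideanSpace ℝ (Fin n) → ℝ)
    (hdiff : ∀ x : EuclideanSpace ℝ (Fin n), 0 < ‖x‖ → ‖x‖ < 1 → DifferentiableAt ℝ h x)
    (hgrad : ∀ x : EuclideanSpace ℝ (Fin n), 0 < ‖x‖ → ‖x‖ < 1 → ‖fderiv ℝ h x‖ ≤ C / ‖x‖)
    (hint : Tendsto
      (fun r : ℝ =>
        (∫ x in {x : EuclideanSpace ℝ (Fin n) | r < ‖x‖ ∧ ‖x‖ < 2 * r}, |h x|) / r ^ n)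
      (nhdsWithin 0 (Set.Ioi 0)) (nhds 0)) :
    ∀ ε > 0, ∃ δ > 0, ∀ x : EuclideanSpace ℝ (Fin n),
      0 < ‖x‖ → ‖x‖ < δ → |h x| < ε := by
  intro ε hε
  set m := min (1 / 4 : ℝ) (ε / (2 * C))
  have hm : 0 < m := by positivity
  have hCm : C * m ≤ ε / 2 := by
    calc C * m ≤ C * (ε / (2 * C)) := mul_le_mul_of_nonneg_left (min_le_right _ _) hC.le
      _ = ε / 2 := by field_simp
  set V := volume.real (ball (0 : EuclideanSpace ℝ (Fin n)) 1)
  have hV : 0 < V :=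
    ENNReal.toReal_pos (measure_ball_pos volume _ one_pos).ne' measure_ball_lt_top.ne
  set c := ε / 2 * (m ^ n * V)
  have hc : 0 < c := by positivity
  obtain ⟨δ, hδ : 0 < δ, hsmall⟩ :=
    mem_nhdsGT_iff_exists_Ioo_subset.mp (hint.eventually (gt_mem_nhds hc))
  refine ⟨min (3 / 4 * δ) (3 / 4), by positivity, fun x hx0 hxδ => ?_⟩
  by_contra! hεx
  have hx1 : ‖x‖ < 3 / 4 := hxδ.trans_le (min_le_right _ _)
  have hxδ' : ‖x‖ < 3 / 4 * δ := hxδ.trans_le (min_le_left _ _)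
  have hlow := sub_mul_le_setIntegral_annulus_div_pow volume hdiff hgrad hC.le
    (r := 2 / 3 * ‖x‖) (by positivity) (by linarith) hm.le (min_le_left _ _) (by ring)
  rw [finrank_euclideanSpace_fin] at hlow
  have hc_le : c ≤ (|h x| - C * m) * (m ^ n * V) :=
    mul_le_mul_of_nonneg_right (by linarith) (by positivity)
  exact (hc_le.trans hlow).not_gt (hsmall ⟨by positivity, by linarith⟩)

theorem h_tendsto_zero_at_origin
    {n : ℕ} (hn : 1 ≤ n) (C : ℝ) (hC : 0 < C)
    (h : EuclideanSpace ℝ (Fin n) → ℝ)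
    (hdiff : ∀ x : EuclideanSpace ℝ (Fin n), 0 < ‖x‖ → ‖x‖ < 1 → DifferentiableAt ℝ h x)
    (hgrad : ∀ x : EuclideanSpace ℝ (Fin n), 0 < ‖x‖ → ‖x‖ < 1 → ‖fderiv ℝ h x‖ ≤ C / ‖x‖)
    (hbd : ∀ x : EuclideanSpace ℝ (Fin n), 0 < ‖x‖ → ‖x‖ < 1 → |h x| ≤ C)
    (hint : Tendsto
      (fun r : ℝ =>
        (∫ x in {x : EuclideanSpace ℝ (Fin n) | r < ‖x‖ ∧ ‖x‖ < 2 * r}, |h x|) / r ^ n)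
      (nhdsWithin 0 (Set.Ioi 0)) (nhds 0)) :
    ∀ ε > 0, ∃ δ > 0, ∀ x : EuclideanSpace ℝ (Fin n),
      0 < ‖x‖ → ‖x‖ < δ → |h x| < ε :=
  h_tendsto_zero_at_origin_general C hC h hdiff hgrad hint
end

section
/- Let n ≥ 1 and R > 0, and let v : ℝⁿ → ℝ be continuous on the open ball B_R(0) and satisfy the super-mean-value property on B_R(0): for every closed ball B̄_ρ(y) ⊆ B_R(0), v(y) ≥ (vol(B_ρ(y)))⁻¹ ∫_{B_ρ(y)} v(x) dx. Define the maximal radial function ṽ on B_R(0) by ṽ(x) = inf{v(y) : |y| = |x|}. Then ṽ is continuous on B_R(0) and satisfies the super-mean-value property on B_R(0): for every closed ball B̄_ρ(y) ⊆ B_R(0), ṽ(y) ≥ (vol(B_ρ(y)))⁻¹ ∫_{B_ρ(y)} ṽ(x) dx. -/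
/-!
On each sphere about the origin the infimum of `v` is attained, say at `y₀` for the sphere
through `y`. A reflection `Q` fixing the origin maps `y` to `y₀`; it preserves spheres, balls and
Lebesgue measure, so `v ∘ Q` again has the super-mean-value property and dominates `ṽ`, with
equality at `y`. Averaging `ṽ ≤ v ∘ Q` over a ball about `y` gives the property for `ṽ`.

Continuity comes from uniform continuity of `v` on closed balls: radial scaling moves a point of
one sphere to the sphere of another radius by exactly the difference of the radii.
-/

open MeasureTheory Metric

section RadialInf

variable {E : Type*} [NormedAddCommGroup E]

noncomputable def radialInf (v : E → ℝ) (x : E) : ℝ :=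
  sInf (v '' sphere 0 ‖x‖)

theorem exists_norm_eq_dist_le [NormedSpace ℝ E] (x z : E) :
    ∃ w : E, ‖w‖ = ‖x‖ ∧ dist w z ≤ |‖x‖ - ‖z‖| := by
  rcases eq_or_ne z 0 with rfl | hz
  · exact ⟨x, rfl, by simp⟩
  have hz' : ‖z‖ ≠ 0 := norm_ne_zero_iff.2 hz
  refine ⟨(‖x‖ / ‖z‖) • z, ?_, le_of_eq ?_⟩
  · rw [norm_smul, Real.norm_of_nonneg (by positivity), div_mul_cancel₀ _ hz']
  · have hsub : (‖x‖ / ‖z‖) • z - z = ((‖x‖ - ‖z‖) / ‖z‖) • z := by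
      rw [sub_div, div_self hz', sub_smul, one_smul]
    rw [dist_eq_norm, hsub, norm_smul, Real.norm_eq_abs, abs_div, abs_norm,
      div_mul_cancel₀ _ hz']

variable [ProperSpace E] {v : E → ℝ} {x : E}

theorem radialInf_le (hv : ContinuousOn v (sphere 0 ‖x‖)) {z : E} (hz : ‖z‖ = ‖x‖) :
    radialInf v x ≤ v z :=
  csInf_le ((isCompact_sphere 0 _).image_of_continuousOn hv).bddBelow
    ⟨z, mem_sphere_zero_iff_norm.2 hz, rfl⟩

theorem exists_norm_eq_radialInf_eq (hv : ContinuousOn v (sphere 0 ‖x‖)) :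
    ∃ z : E, ‖z‖ = ‖x‖ ∧ v z = radialInf v x := by
  obtain ⟨z, hz, hvz⟩ := ((isCompact_sphere 0 _).image_of_continuousOn hv).sInf_mem
    ⟨v x, x, mem_sphere_zero_iff_norm.2 rfl, rfl⟩
  exact ⟨z, mem_sphere_zero_iff_norm.1 hz, hvz⟩

variable [NormedSpace ℝ E]

theorem uniformContinuousOn_radialInf {r : ℝ} (hv : UniformContinuousOn v (closedBall 0 r)) :
    UniformContinuousOn (radialInf v) (closedBall 0 r) := by
  have hsphere : ∀ x ∈ closedBall (0 : E) r, ContinuousOn v (sphere 0 ‖x‖) := fun x hx =>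
    hv.continuousOn.mono <|
      sphere_subset_closedBall.trans (closedBall_subset_closedBall (mem_closedBall_zero_iff.1 hx))
  rw [Metric.uniformContinuousOn_iff] at hv ⊢
  intro ε hε
  obtain ⟨δ, hδ, hvδ⟩ := hv (ε / 2) (half_pos hε)
  have key : ∀ x ∈ closedBall (0 : E) r, ∀ y ∈ closedBall (0 : E) r, dist x y < δ →
      radialInf v x ≤ radialInf v y + ε / 2 := by
    intro x hx y hy hxy
    obtain ⟨z, hz, hvz⟩ := exists_norm_eq_radialInf_eq (hsphere y hy)
    obtain ⟨w, hw, hwz⟩ := exists_norm_eq_dist_le x z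
    have hw_mem : w ∈ closedBall (0 : E) r := by
      rwa [mem_closedBall_zero_iff, hw, ← mem_closedBall_zero_iff]
    have hz_mem : z ∈ closedBall (0 : E) r := by
      rwa [mem_closedBall_zero_iff, hz, ← mem_closedBall_zero_iff]
    have hdist : dist w z < δ := by
      rw [hz] at hwz
      exact hwz.trans_lt ((abs_norm_sub_norm_le x y).trans_lt (by rwa [← dist_eq_norm]))
    have hvwz := hvδ w hw_mem z hz_mem hdist
    rw [Real.dist_eq] at hvwz
    calc radialInf v x ≤ v w := radialInf_le (hsphere x hx) hw
      _ ≤ v z + ε / 2 := by linarith [le_abs_self (v w - v z)]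
      _ = radialInf v y + ε / 2 := by rw [hvz]
  refine ⟨δ, hδ, fun x hx y hy hxy => ?_⟩
  have hxy' := key x hx y hy hxy
  have hyx' := key y hy x hx (by rwa [dist_comm])
  rw [Real.dist_eq, abs_lt]
  constructor <;> linarith

theorem continuousOn_radialInf {R : ℝ} (hv : ContinuousOn v (ball 0 R)) :
    ContinuousOn (radialInf v) (ball 0 R) := by
  intro x hx
  obtain ⟨r, hxr, hrR⟩ := exists_between (mem_ball_zero_iff.1 hx)
  have huc := (isCompact_closedBall (0 : E) r).uniformContinuousOn_of_continuous
    (hv.mono (closedBall_subset_ball hrR))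
  exact ((uniformContinuousOn_radialInf huc).continuousOn.continuousAt
    (closedBall_mem_nhds_of_mem (mem_ball_zero_iff.2 hxr))).continuousWithinAt

end RadialInf

section SuperMeanValue

variable {E : Type*} [NormedAddCommGroup E] [InnerProductSpace ℝ E] [FiniteDimensional ℝ E]
  [MeasurableSpace E] [BorelSpace E] {v : E → ℝ}

def SuperMeanValueOn (v : E → ℝ) (U : Set E) : Prop :=
  ∀ (y : E) (ρ : ℝ), 0 < ρ → closedBall y ρ ⊆ U →
    (volume (ball y ρ)).toReal⁻¹ * ∫ x in ball y ρ, v x ≤ v y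

theorem SuperMeanValueOn.comp_linearIsometryEquiv {U : Set E} (hv : SuperMeanValueOn v U)
    (Q : E ≃ₗᵢ[ℝ] E) : SuperMeanValueOn (v ∘ Q) (Q ⁻¹' U) := by
  intro y ρ hρ hsub
  have hball : Q ⁻¹' ball (Q y) ρ = ball y ρ := Q.isometry.preimage_ball y ρ
  have hsub' : closedBall (Q y) ρ ⊆ U := by
    rw [← Q.image_closedBall]
    exact Set.image_subset_iff.2 hsub
  have hint : ∫ x in ball y ρ, v (Q x) = ∫ x in ball (Q y) ρ, v x := by
    rw [← hball]
    exact Q.measurePreserving.setIntegral_preimage_emb Q.toHomeomorph.measurableEmbedding v _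
  have hvol : volume (ball y ρ) = volume (ball (Q y) ρ) := by
    rw [← hball]
    exact Q.measurePreserving.measure_preimage measurableSet_ball.nullMeasurableSet
  simpa only [Function.comp_apply, hint, hvol] using hv (Q y) ρ hρ hsub'

theorem superMeanValueOn_radialInf {R : ℝ} (hcont : ContinuousOn v (ball 0 R))
    (hv : SuperMeanValueOn v (ball 0 R)) : SuperMeanValueOn (radialInf v) (ball 0 R) := by
  intro y ρ hρ hsub
  have hnorm : ∀ x ∈ closedBall y ρ, ‖x‖ < R := fun x hx => mem_ball_zero_iff.1 (hsub hx)
  have hsphere : ∀ x ∈ closedBall y ρ, ContinuousOn v (sphere 0 ‖x‖) := fun x hx =>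
    hcont.mono (sphere_subset_ball (hnorm x hx))
  obtain ⟨y₀, hy₀, hvy₀⟩ :=
    exists_norm_eq_radialInf_eq (hsphere y (mem_closedBall_self hρ.le))
  set Q : E ≃ₗᵢ[ℝ] E := Submodule.reflection (ℝ ∙ (y - y₀))ᗮ
  have hQy : Q y = y₀ := Submodule.reflection_sub hy₀.symm
  have hQv : SuperMeanValueOn (v ∘ Q) (ball 0 R) := by
    simpa only [LinearIsometryEquiv.preimage_ball, map_zero] using hv.comp_linearIsometryEquiv Q
  have hle : ∀ x ∈ ball y ρ, radialInf v x ≤ v (Q x) := fun x hx =>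
    radialInf_le (hsphere x (ball_subset_closedBall hx)) (Q.norm_map x)
  have hTcont : ContinuousOn (radialInf v) (closedBall y ρ) :=
    (continuousOn_radialInf hcont).mono hsub
  have hQcont : ContinuousOn (v ∘ Q) (closedBall y ρ) :=
    hcont.comp Q.continuous.continuousOn fun x hx => by
      simpa only [mem_ball_zero_iff, Q.norm_map] using hnorm x hx
  have hint : ∫ x in ball y ρ, radialInf v x ≤ ∫ x in ball y ρ, v (Q x) :=
    setIntegral_mono_on
      ((hTcont.integrableOn_compact (isCompact_closedBall y ρ)).mono_set ball_subset_closedBall)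
      ((hQcont.integrableOn_compact (isCompact_closedBall y ρ)).mono_set ball_subset_closedBall)
      measurableSet_ball hle
  calc (volume (ball y ρ)).toReal⁻¹ * ∫ x in ball y ρ, radialInf v x
      ≤ (volume (ball y ρ)).toReal⁻¹ * ∫ x in ball y ρ, v (Q x) := by gcongr
    _ ≤ v (Q y) := hQv y ρ hρ hsub
    _ = radialInf v y := by rw [hQy, hvy₀]

end SuperMeanValue

theorem maximal_radial_function_superMeanValue_general
    {n : ℕ} (R : ℝ)
    (v : EuclideanSpace ℝ (Fin n) → ℝ)
    (hcont : ContinuousOn v (ball (0 : EuclideanSpace ℝ (Fin n)) R))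
    (hsmv : ∀ (y : EuclideanSpace ℝ (Fin n)) (ρ : ℝ), 0 < ρ →
      closedBall y ρ ⊆ ball (0 : EuclideanSpace ℝ (Fin n)) R →
      (volume (ball y ρ)).toReal⁻¹ * ∫ x in ball y ρ, v x ≤ v y)
    (vTilde : EuclideanSpace ℝ (Fin n) → ℝ)
    (hvTilde : ∀ x, vTilde x = sInf (v '' {y : EuclideanSpace ℝ (Fin n) | ‖y‖ = ‖x‖})) :
    ContinuousOn vTilde (ball (0 : EuclideanSpace ℝ (Fin n)) R) ∧
      ∀ (y : EuclideanSpace ℝ (Fin n)) (ρ : ℝ), 0 < ρ →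
        closedBall y ρ ⊆ ball (0 : EuclideanSpace ℝ (Fin n)) R →
        (volume (ball y ρ)).toReal⁻¹ * ∫ x in ball y ρ, vTilde x ≤ vTilde y := by
  obtain rfl : vTilde = radialInf v := funext fun x => by
    rw [hvTilde, radialInf]
    congr 2
    ext y
    exact mem_sphere_zero_iff_norm.symm
  exact ⟨continuousOn_radialInf hcont, superMeanValueOn_radialInf hcont hsmv⟩

theorem maximal_radial_function_superMeanValue
    {n : ℕ} (hn : 1 ≤ n) (R : ℝ) (hR : 0 < R)
    (v : EuclideanSpace ℝ (Fin n) → ℝ)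
    (hcont : ContinuousOn v (ball (0 : EuclideanSpace ℝ (Fin n)) R))
    (hsmv : ∀ (y : EuclideanSpace ℝ (Fin n)) (ρ : ℝ), 0 < ρ →
      closedBall y ρ ⊆ ball (0 : EuclideanSpace ℝ (Fin n)) R →
      (volume (ball y ρ)).toReal⁻¹ * ∫ x in ball y ρ, v x ≤ v y)
    (vTilde : EuclideanSpace ℝ (Fin n) → ℝ)
    (hvTilde : ∀ x, vTilde x = sInf (v '' {y : EuclideanSpace ℝ (Fin n) | ‖y‖ = ‖x‖})) :
    ContinuousOn vTilde (ball (0 : EuclideanSpace ℝ (Fin n)) R) ∧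
      ∀ (y : EuclideanSpace ℝ (Fin n)) (ρ : ℝ), 0 < ρ →
        closedBall y ρ ⊆ ball (0 : EuclideanSpace ℝ (Fin n)) R →
        (volume (ball y ρ)).toReal⁻¹ * ∫ x in ball y ρ, vTilde x ≤ vTilde y :=
  maximal_radial_function_superMeanValue_general R v hcont hsmv vTilde hvTilde
end
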